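/- If d₁ > 0, then as k → ∞ the largest real part among the three roots of the cubic λ³ + (d₁k² - d₃ + 1)λ² + ((d₁+1)k² - d₃)λ + k²(d₁k² - d₃ - cd₂/δ) = 0 tends to -1/2. Specifically, the three roots satisfy λ₁ = -d₁k² + O(k), λ₂ = -ik - 1/2 + O(1/k), λ₃ = ik - 1/2 + O(1/k). -/
import Mathlib
set_option maxHeartbeats 1000000


open Filter Asymptotics

/-- If `d₁ > 0`, then as `k → ∞` the three roots of the characteristic cubic
`λ³ + (d₁k² - d₃ + 1)λ² + ((d₁+1)k² - d₃)λ + k²(d₁k² - d₃ - c̄d₂/δ) = 0`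
satisfy `λ₁ = -d₁k² + O(k)`, `λ₂ = -ik - 1/2 + O(1/k)`, `λ₃ = ik - 1/2 + O(1/k)`,
and the largest real part among them tends to `-1/2`. -/
theorem stmt_4 (d₁ d₂ d₃ cbar δ : ℝ) (hd₁ : 0 < d₁) (hd₂ : 0 ≤ d₂)
    (hc : 0 < cbar) (hδ : 0 < δ) :
    ∃ lam₁ lam₂ lam₃ : ℝ → ℂ,
      (∀ᶠ k in atTop, ∀ z ∈ ({lam₁ k, lam₂ k, lam₃ k} : Set ℂ),
        z ^ 3 + ((d₁ * k ^ 2 - d₃ + 1 : ℝ) : ℂ) * z ^ 2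
          + (((d₁ + 1) * k ^ 2 - d₃ : ℝ) : ℂ) * z
          + ((k ^ 2 * (d₁ * k ^ 2 - d₃ - cbar * d₂ / δ) : ℝ) : ℂ) = 0) ∧
      (fun k : ℝ => lam₁ k + ((d₁ * k ^ 2 : ℝ) : ℂ)) =O[atTop] (fun k : ℝ => (k : ℂ)) ∧
      (fun k : ℝ => lam₂ k - (-Complex.I * (k : ℂ) - 1 / 2)) =O[atTop]
        (fun k : ℝ => 1 / (k : ℂ)) ∧
      (fun k : ℝ => lam₃ k - (Complex.I * (k : ℂ) - 1 / 2)) =O[atTop]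
        (fun k : ℝ => 1 / (k : ℂ)) ∧
      Tendsto (fun k : ℝ => max (max (lam₁ k).re (lam₂ k).re) (lam₃ k).re)
        atTop (nhds (-1 / 2)) := by
  classical
  set γ : ℝ := cbar * d₂ / δ with hγdef
  have hγ : 0 ≤ γ := by rw [hγdef]; positivity
  set C : ℝ := (γ + 1) / d₁ ^ 2 with hCdef
  have hC : 0 < C := by rw [hCdef]; positivity
  set B₂ : ℝ := 4*C + 4*C^2 + 4*d₁*C + 4*C*|d₃| + (1+C)^2 with hB₂def
  have hB₂ : 0 < B₂ := by rw [hB₂def]; positivity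
  set F : ℝ → ℝ → ℝ := fun k x => x^3 + (d₁*k^2 - d₃ + 1)*x^2 + ((d₁+1)*k^2 - d₃)*x
      + k^2*(d₁*k^2 - d₃ - γ) with hFdef
  set φp : ℝ → ℝ := fun w => -γ + C*((d₁ - d₃*w)^2 - d₁*w + d₃*w^2 + w)
      + C^2*((1+2*d₃)*w^3 - 2*d₁*w^2) + C^3*w^4 with hφpdef
  set φm : ℝ → ℝ := fun w => -γ - C*((d₁ - d₃*w)^2 - d₁*w + d₃*w^2 + w)
      + C^2*((1+2*d₃)*w^3 - 2*d₁*w^2) - C^3*w^4 with hφmdef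
  clear_value γ C B₂ F φp φm
  have hCd : C * d₁^2 = γ + 1 := by rw [hCdef]; field_simp
  have hφp0 : φp 0 = 1 := by simp [hφpdef]; nlinarith [hCd]
  have hφm0 : φm 0 < 0 := by simp [hφmdef]; nlinarith [hCd]
  have hk2top : Tendsto (fun k : ℝ => k^2) atTop atTop :=
    tendsto_pow_atTop (by norm_num)
  have hw : Tendsto (fun k : ℝ => 1 / k^2) atTop (nhds 0) :=
    hk2top.const_div_atTop 1
  have hidp : ∀ k : ℝ, k ≠ 0 → F k (-(d₁*k^2) + d₃ + C/k^2) = k^2 * φp (1/k^2) := by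
    intro k hk
    simp only [hFdef, hφpdef]
    field_simp
    ring
  have hidm : ∀ k : ℝ, k ≠ 0 → F k (-(d₁*k^2) + d₃ - C/k^2) = k^2 * φm (1/k^2) := by
    intro k hk
    simp only [hFdef, hφmdef]
    field_simp
    ring
  have hcontp : Continuous φp := by rw [hφpdef]; fun_prop
  have hcontm : Continuous φm := by rw [hφmdef]; fun_prop
  have hPp : ∀ᶠ k : ℝ in atTop, 0 < F k (-(d₁*k^2) + d₃ + C/k^2) := by
    have h1 : Tendsto (fun k : ℝ => φp (1/k^2)) atTop (nhds 1) := by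
      have := (hcontp.tendsto 0).comp hw
      rwa [hφp0] at this
    filter_upwards [h1.eventually_const_lt (by norm_num : (0:ℝ) < 1),
      eventually_gt_atTop 0] with k h hk
    rw [hidp k hk.ne']
    positivity
  have hPm : ∀ᶠ k : ℝ in atTop, F k (-(d₁*k^2) + d₃ - C/k^2) < 0 := by
    have h1 : Tendsto (fun k : ℝ => φm (1/k^2)) atTop (nhds (φm 0)) :=
      (hcontm.tendsto 0).comp hw
    filter_upwards [h1.eventually_lt_const hφm0,
      eventually_gt_atTop 0] with k h hk
    have hk2 : 0 < k^2 := by positivity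
    rw [hidm k hk.ne']
    exact mul_neg_of_pos_of_neg hk2 h
  have hroot : ∀ᶠ k : ℝ in atTop, ∃ x,
      x ∈ Set.Icc (-(d₁*k^2) + d₃ - C/k^2) (-(d₁*k^2) + d₃ + C/k^2) ∧ F k x = 0 := by
    filter_upwards [hPp, hPm, eventually_gt_atTop 0] with k hp hm hk
    have hle : -(d₁*k^2) + d₃ - C/k^2 ≤ -(d₁*k^2) + d₃ + C/k^2 := by
      have : 0 ≤ C/k^2 := by positivity
      linarith
    have hcont : ContinuousOn (F k) (Set.Icc (-(d₁*k^2) + d₃ - C/k^2) (-(d₁*k^2) + d₃ + C/k^2)) := by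
      rw [hFdef]; fun_prop
    have := intermediate_value_Icc hle hcont
    obtain ⟨x, hx, hfx⟩ := this ⟨hm.le, hp.le⟩
    exact ⟨x, hx, hfx⟩
  set P : ℝ → Prop := fun k => ∃ x,
      x ∈ Set.Icc (-(d₁*k^2) + d₃ - C/k^2) (-(d₁*k^2) + d₃ + C/k^2) ∧ F k x = 0 with hPdef
  set r : ℝ → ℝ := fun k => if h : P k then h.choose else 0 with hrdef
  set u : ℝ → ℝ := fun k => d₁*k^2 - d₃ + 1 + r k with hudef
  set v : ℝ → ℝ := fun k => (d₁+1)*k^2 - d₃ + r k * u k with hvdef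
  set D : ℝ → ℝ := fun k => 4 * v k - u k ^ 2 with hDdef
  clear_value r u v D
  have hr : ∀ᶠ k : ℝ in atTop,
      |r k + d₁*k^2 - d₃| ≤ C/k^2 ∧ F k (r k) = 0 := by
    filter_upwards [hroot] with k h
    have hrk : r k ∈ Set.Icc (-(d₁*k^2) + d₃ - C/k^2) (-(d₁*k^2) + d₃ + C/k^2) ∧ F k (r k) = 0 := by
      rw [hrdef]
      simp only [dif_pos h]
      exact h.choose_spec
    obtain ⟨⟨h1, h2⟩, h3⟩ := hrk
    exact ⟨abs_le.mpr ⟨by linarith, by linarith⟩, h3⟩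
  -- master eventual hypothesis
  have hgood : ∀ᶠ k : ℝ in atTop, 1 ≤ k ∧ B₂ ≤ k^2 ∧
      |r k + d₁*k^2 - d₃| ≤ C/k^2 ∧ F k (r k) = 0 ∧
      |D k - 4*k^2| ≤ B₂ ∧ k^2 ≤ D k := by
    have hB2k : ∀ᶠ k : ℝ in atTop, B₂ ≤ k^2 := hk2top.eventually_ge_atTop B₂
    filter_upwards [hr, eventually_ge_atTop 1, hB2k] with k ⟨he, hF0⟩ hk1 hkB
    have hk2x : (1:ℝ) ≤ k^2 := by nlinarith
    have habs : |D k - 4*k^2| ≤ B₂ := by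
      have hk2 : (1:ℝ) ≤ k^2 := by nlinarith
      have hk2' : (0:ℝ) < k^2 := by linarith
      obtain ⟨e, hedef⟩ : ∃ e, e = r k + d₁*k^2 - d₃ := ⟨_, rfl⟩
      rw [← hedef] at he
      have heC : |e| ≤ C := le_trans he (div_le_self hC.le hk2)
      have he1 : e ≤ C/k^2 := (abs_le.mp he).2
      have he2 : -(C/k^2) ≤ e := (abs_le.mp he).1
      have hek2a : e * k^2 ≤ C := by
        have := mul_le_mul_of_nonneg_right he1 hk2'.le
        rwa [div_mul_cancel₀ _ hk2'.ne'] at this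
      have hek2b : -C ≤ e * k^2 := by
        have h' := mul_le_mul_of_nonneg_right he2 hk2'.le
        have h'' : -(C/k^2) * k^2 = -C := by field_simp
        linarith
      have hesq : e^2 ≤ C^2 := sq_le_sq' (by cases abs_le.mp heC; linarith) (abs_le.mp heC).2
      have hed3 : |e * d₃| ≤ C * |d₃| := by
        rw [abs_mul]
        exact mul_le_mul_of_nonneg_right heC (abs_nonneg _)
      obtain ⟨hed3a, hed3b⟩ := abs_le.mp hed3
      have heCa := (abs_le.mp heC).1
      have heCb := (abs_le.mp heC).2
      have hDe : D k - 4*k^2 = 4*e + 4*e^2 - 4*d₁*(e*k^2) + 4*(e*d₃) - (1+e)^2 := by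
        rw [hDdef, hvdef, hudef, hedef]; ring
      rw [hDe, hB₂def, abs_le]
      constructor
      · nlinarith [mul_le_mul_of_nonneg_left hek2a hd₁.le, mul_le_mul_of_nonneg_left hek2b hd₁.le,
          sq_nonneg (1+e)]
      · nlinarith [mul_le_mul_of_nonneg_left hek2a hd₁.le, mul_le_mul_of_nonneg_left hek2b hd₁.le,
          sq_nonneg (1+e), sq_le_sq' (by linarith : -(1+C) ≤ 1+e) (by linarith : 1+e ≤ 1+C)]
    refine ⟨hk1, hkB, he, hF0, habs, ?_⟩
    have := (abs_le.mp habs).1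
    nlinarith
  set L1 : ℝ → ℂ := fun k => ((r k : ℝ) : ℂ) with hL1def
  set L2 : ℝ → ℂ := fun k => ((-(u k)/2 : ℝ) : ℂ)
      - Complex.I * ((Real.sqrt (D k)/2 : ℝ) : ℂ) with hL2def
  set L3 : ℝ → ℂ := fun k => ((-(u k)/2 : ℝ) : ℂ)
      + Complex.I * ((Real.sqrt (D k)/2 : ℝ) : ℂ) with hL3def
  refine ⟨L1, L2, L3, ?_, ?_, ?_, ?_, ?_⟩
  · -- roots
    filter_upwards [hgood] with k hk
    obtain ⟨hk1, hkB, he, hF0, habs, hDk⟩ := hk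
    have hk0 : (0:ℝ) < k := lt_of_lt_of_le one_pos hk1
    have hD0 : (0:ℝ) ≤ D k := le_trans (by positivity) hDk
    have hfact : ∀ z : ℂ, z ^ 3 + ((d₁ * k ^ 2 - d₃ + 1 : ℝ) : ℂ) * z ^ 2
        + (((d₁ + 1) * k ^ 2 - d₃ : ℝ) : ℂ) * z
        + ((k ^ 2 * (d₁ * k ^ 2 - d₃ - γ) : ℝ) : ℂ)
        = (z - ((r k : ℝ) : ℂ)) * (z ^ 2 + ((u k : ℝ) : ℂ) * z + ((v k : ℝ) : ℂ))
          + ((F k (r k) : ℝ) : ℂ) := by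
      intro z
      simp only [hFdef, hudef, hvdef]
      push_cast
      ring
    have hSq : ((Real.sqrt (D k) : ℝ) : ℂ) ^ 2 = ((D k : ℝ) : ℂ) := by
      norm_cast
      exact Real.sq_sqrt hD0
    have hDeq : ((D k : ℝ) : ℂ) = 4 * ((v k : ℝ) : ℂ) - ((u k : ℝ) : ℂ) ^ 2 := by
      rw [hDdef]; push_cast; ring
    have hS4 : ((Real.sqrt (D k) : ℝ) : ℂ) ^ 2
        = 4 * ((v k : ℝ) : ℂ) - ((u k : ℝ) : ℂ) ^ 2 := hSq.trans hDeq
    have hq2 : (L2 k) ^ 2 + ((u k : ℝ) : ℂ) * L2 k + ((v k : ℝ) : ℂ) = 0 := by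
      rw [hL2def]
      push_cast
      linear_combination (((Real.sqrt (D k) : ℝ) : ℂ) ^ 2 / 4) * Complex.I_sq - (1/4 : ℂ) * hS4
    have hq3 : (L3 k) ^ 2 + ((u k : ℝ) : ℂ) * L3 k + ((v k : ℝ) : ℂ) = 0 := by
      rw [hL3def]
      push_cast
      linear_combination (((Real.sqrt (D k) : ℝ) : ℂ) ^ 2 / 4) * Complex.I_sq - (1/4 : ℂ) * hS4
    intro z hz
    simp only [Set.mem_insert_iff, Set.mem_singleton_iff] at hz
    rcases hz with h | h | h <;> subst h
    · rw [hfact, hF0, hL1def]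
      push_cast
      ring
    · rw [hfact, hF0, hq2]
      push_cast
      ring
    · rw [hfact, hF0, hq3]
      push_cast
      ring
  · -- L1 = -d₁k² + O(k)
    rw [isBigO_iff]
    refine ⟨C + |d₃|, ?_⟩
    filter_upwards [hgood] with k hk
    obtain ⟨hk1, hkB, he, hF0, habs, hDk⟩ := hk
    have hk0 : (0:ℝ) < k := lt_of_lt_of_le one_pos hk1
    have hk2 : (1:ℝ) ≤ k ^ 2 := by nlinarith
    have heC : |r k + d₁ * k ^ 2 - d₃| ≤ C := le_trans he (div_le_self hC.le hk2)
    have hcast : L1 k + ((d₁ * k ^ 2 : ℝ) : ℂ) = ((r k + d₁ * k ^ 2 : ℝ) : ℂ) := by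
      rw [hL1def]; push_cast; ring
    rw [hcast, Complex.norm_real, Complex.norm_real, Real.norm_eq_abs, Real.norm_eq_abs]
    have h1 : |r k + d₁ * k ^ 2| ≤ C + |d₃| := by
      have h2 : |r k + d₁ * k ^ 2| ≤ |r k + d₁ * k ^ 2 - d₃| + |d₃| := by
        have := abs_add_le (r k + d₁ * k ^ 2 - d₃) d₃
        simpa using this
      linarith
    have hkk : |k| = k := abs_of_pos hk0
    nlinarith [abs_nonneg d₃]
  · -- L2 asymptotics
    rw [isBigO_iff]
    refine ⟨C/2 + B₂/4, ?_⟩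
    filter_upwards [hgood] with k hk
    obtain ⟨hk1, hkB, he, hF0, habs, hDk⟩ := hk
    have hk0 : (0:ℝ) < k := lt_of_lt_of_le one_pos hk1
    have hk2 : (1:ℝ) ≤ k ^ 2 := by nlinarith
    have hD0 : (0:ℝ) ≤ D k := le_trans (by positivity) hDk
    have hsq := Real.sq_sqrt hD0
    have hfac : (Real.sqrt (D k) - 2*k) * (Real.sqrt (D k) + 2*k) = D k - 4*k^2 := by
      linear_combination hsq
    have hpos : (0:ℝ) < Real.sqrt (D k) + 2*k := by positivity
    have hsb : |Real.sqrt (D k) - 2*k| ≤ B₂/(2*k) := by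
      rw [le_div_iff₀ (by positivity : (0:ℝ) < 2*k)]
      calc |Real.sqrt (D k) - 2*k| * (2*k)
          ≤ |Real.sqrt (D k) - 2*k| * (Real.sqrt (D k) + 2*k) := by
            apply mul_le_mul_of_nonneg_left _ (abs_nonneg _)
            nlinarith [Real.sqrt_nonneg (D k)]
        _ = |D k - 4*k^2| := by rw [← hfac, abs_mul, abs_of_pos hpos]
        _ ≤ B₂ := habs
    have hdiff : L2 k - (-Complex.I * (k:ℂ) - 1/2)
        = (((1 - u k)/2 : ℝ) : ℂ) + Complex.I * (((k - Real.sqrt (D k)/2) : ℝ) : ℂ) := by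
      rw [hL2def]; push_cast; ring
    rw [hdiff]
    have hb1 : |(1 - u k)/2| ≤ C/(2*k) := by
      have hrw : (1 - u k)/2 = -((r k + d₁ * k ^ 2 - d₃)/2) := by rw [hudef]; ring
      rw [hrw, abs_neg, abs_div, abs_two]
      have : C/k^2/2 ≤ C/(2*k) := by
        have hkk2 : k ≤ k^2 := by nlinarith
        have h8 : C/k^2 ≤ C/k := div_le_div_of_nonneg_left hC.le hk0 hkk2
        have h9 : C/k/2 = C/(2*k) := by ring
        linarith
      have h5 : |r k + d₁ * k ^ 2 - d₃| / 2 ≤ C/k^2/2 := by linarith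
      linarith
    have hb2 : |k - Real.sqrt (D k)/2| ≤ B₂/(4*k) := by
      have hrw : k - Real.sqrt (D k)/2 = -((Real.sqrt (D k) - 2*k)/2) := by ring
      rw [hrw, abs_neg, abs_div, abs_two]
      have h6 : B₂/(2*k)/2 = B₂/(4*k) := by ring
      linarith [hsb]
    have hnorm : ‖(((1 - u k)/2 : ℝ) : ℂ) + Complex.I * (((k - Real.sqrt (D k)/2) : ℝ) : ℂ)‖
        ≤ |(1 - u k)/2| + |k - Real.sqrt (D k)/2| := by
      calc ‖(((1 - u k)/2 : ℝ) : ℂ) + Complex.I * (((k - Real.sqrt (D k)/2) : ℝ) : ℂ)‖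
          ≤ ‖(((1 - u k)/2 : ℝ) : ℂ)‖ + ‖Complex.I * (((k - Real.sqrt (D k)/2) : ℝ) : ℂ)‖ :=
            norm_add_le _ _
        _ = |(1 - u k)/2| + |k - Real.sqrt (D k)/2| := by
            rw [norm_mul, Complex.norm_I, one_mul, Complex.norm_real, Complex.norm_real,
              Real.norm_eq_abs, Real.norm_eq_abs]
    have hRHS : ‖(1 : ℂ)/(k:ℂ)‖ = 1/k := by
      rw [norm_div, norm_one, Complex.norm_real, Real.norm_eq_abs, abs_of_pos hk0]
    rw [hRHS]
    have hfin : (C/2 + B₂/4) * (1/k) = C/(2*k) + B₂/(4*k) := by ring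
    linarith
  · -- L3 asymptotics
    rw [isBigO_iff]
    refine ⟨C/2 + B₂/4, ?_⟩
    filter_upwards [hgood] with k hk
    obtain ⟨hk1, hkB, he, hF0, habs, hDk⟩ := hk
    have hk0 : (0:ℝ) < k := lt_of_lt_of_le one_pos hk1
    have hk2 : (1:ℝ) ≤ k ^ 2 := by nlinarith
    have hD0 : (0:ℝ) ≤ D k := le_trans (by positivity) hDk
    have hsq := Real.sq_sqrt hD0
    have hfac : (Real.sqrt (D k) - 2*k) * (Real.sqrt (D k) + 2*k) = D k - 4*k^2 := by
      linear_combination hsq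
    have hpos : (0:ℝ) < Real.sqrt (D k) + 2*k := by positivity
    have hsb : |Real.sqrt (D k) - 2*k| ≤ B₂/(2*k) := by
      rw [le_div_iff₀ (by positivity : (0:ℝ) < 2*k)]
      calc |Real.sqrt (D k) - 2*k| * (2*k)
          ≤ |Real.sqrt (D k) - 2*k| * (Real.sqrt (D k) + 2*k) := by
            apply mul_le_mul_of_nonneg_left _ (abs_nonneg _)
            nlinarith [Real.sqrt_nonneg (D k)]
        _ = |D k - 4*k^2| := by rw [← hfac, abs_mul, abs_of_pos hpos]
        _ ≤ B₂ := habs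
    have hdiff : L3 k - (Complex.I * (k:ℂ) - 1/2)
        = (((1 - u k)/2 : ℝ) : ℂ) + Complex.I * (((Real.sqrt (D k)/2 - k) : ℝ) : ℂ) := by
      rw [hL3def]; push_cast; ring
    rw [hdiff]
    have hb1 : |(1 - u k)/2| ≤ C/(2*k) := by
      have hrw : (1 - u k)/2 = -((r k + d₁ * k ^ 2 - d₃)/2) := by rw [hudef]; ring
      rw [hrw, abs_neg, abs_div, abs_two]
      have : C/k^2/2 ≤ C/(2*k) := by
        have hkk2 : k ≤ k^2 := by nlinarith
        have h8 : C/k^2 ≤ C/k := div_le_div_of_nonneg_left hC.le hk0 hkk2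
        have h9 : C/k/2 = C/(2*k) := by ring
        linarith
      have h5 : |r k + d₁ * k ^ 2 - d₃| / 2 ≤ C/k^2/2 := by linarith
      linarith
    have hb2 : |Real.sqrt (D k)/2 - k| ≤ B₂/(4*k) := by
      have hrw : Real.sqrt (D k)/2 - k = (Real.sqrt (D k) - 2*k)/2 := by ring
      rw [hrw, abs_div, abs_two]
      have h6 : B₂/(2*k)/2 = B₂/(4*k) := by ring
      linarith [hsb]
    have hnorm : ‖(((1 - u k)/2 : ℝ) : ℂ) + Complex.I * (((Real.sqrt (D k)/2 - k) : ℝ) : ℂ)‖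
        ≤ |(1 - u k)/2| + |Real.sqrt (D k)/2 - k| := by
      calc ‖(((1 - u k)/2 : ℝ) : ℂ) + Complex.I * (((Real.sqrt (D k)/2 - k) : ℝ) : ℂ)‖
          ≤ ‖(((1 - u k)/2 : ℝ) : ℂ)‖ + ‖Complex.I * (((Real.sqrt (D k)/2 - k) : ℝ) : ℂ)‖ :=
            norm_add_le _ _
        _ = |(1 - u k)/2| + |Real.sqrt (D k)/2 - k| := by
            rw [norm_mul, Complex.norm_I, one_mul, Complex.norm_real, Complex.norm_real,
              Real.norm_eq_abs, Real.norm_eq_abs]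
    have hRHS : ‖(1 : ℂ)/(k:ℂ)‖ = 1/k := by
      rw [norm_div, norm_one, Complex.norm_real, Real.norm_eq_abs, abs_of_pos hk0]
    rw [hRHS]
    have hfin : (C/2 + B₂/4) * (1/k) = C/(2*k) + B₂/(4*k) := by ring
    linarith
  · -- Tendsto of max of real parts
    have hCk20 : Tendsto (fun k : ℝ => C/k^2) atTop (nhds 0) := hk2top.const_div_atTop C
    have he0 : Tendsto (fun k : ℝ => r k + d₁*k^2 - d₃) atTop (nhds 0) := by
      apply squeeze_zero_norm' _ hCk20
      filter_upwards [hgood] with k hk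
      simpa [Real.norm_eq_abs] using hk.2.2.1
    have hu1 : Tendsto (fun k : ℝ => u k) atTop (nhds 1) := by
      have h := he0.add_const 1
      rw [zero_add] at h
      apply h.congr
      intro k
      rw [hudef]
      ring
    have hneg : Tendsto (fun k : ℝ => -u k/2) atTop (nhds (-1/2)) :=
      (hu1.neg).div_const 2
    have hru : ∀ᶠ k : ℝ in atTop, r k ≤ -u k/2 := by
      have h2 : ∀ᶠ k : ℝ in atTop, u k < 2 := hu1.eventually_lt_const (by norm_num)
      have h3 : ∀ᶠ k : ℝ in atTop, d₃ + C + 1 ≤ d₁*k^2 :=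
        (Tendsto.const_mul_atTop hd₁ hk2top).eventually_ge_atTop _
      filter_upwards [hgood, h2, h3] with k hk hu2 hd
      obtain ⟨hk1, _, he, _⟩ := hk
      have hk2 : (1:ℝ) ≤ k^2 := by nlinarith
      have heC : r k + d₁*k^2 - d₃ ≤ C :=
        le_trans (abs_le.mp he).2 (div_le_self hC.le hk2)
      linarith
    have heq : (fun k : ℝ => -u k/2)
        =ᶠ[atTop] (fun k => max (max (L1 k).re (L2 k).re) (L3 k).re) := by
      filter_upwards [hru] with k hk
      have e1 : (L1 k).re = r k := by rw [hL1def]; simp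
      have e2 : (L2 k).re = -u k/2 := by rw [hL2def]; simp [neg_div]
      have e3 : (L3 k).re = -u k/2 := by rw [hL3def]; simp [neg_div]
      rw [e1, e2, e3, max_eq_right hk, max_self]
    exact hneg.congr' heq
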